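/- Suppose x ∼ Pois(λ) for λ ∈ ℝ_{≥0}^m; given x, the components ȳ^{(i)} ∼ Binomial(x^{(i)}, q^{(i)}) are conditionally independent, q ∈ [0,1]^m; given ȳ, the rows of M ∈ ℕ_0^{m×m} are conditionally independent with M^{(i,·)} ∼ Multinomial(ȳ^{(i)}, G^{(i,·)}) for a row-stochastic m×m matrix G; ỹ := (1_m^T M)^T; and y := ỹ + ŷ where ŷ ∼ Pois(κ) is independent, κ ∈ ℝ^m_{≥0}. Then y ∼ Pois(((λ ∘ q)^T G)^T + κ); in particular log p(y) = −[(λ∘q)^T G + κ^T] 1_m + y^T log(((λ∘q)^T G)^T + κ) − 1_m^T log(y!). -/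

import Mathlib

open scoped BigOperators Classical
open MeasureTheory Filter

noncomputable section

namespace PAL

/-- Poisson probability mass function with rate `lam`. -/
def poisP (lam : ℝ) (k : ℕ) : ℝ := Real.exp (-lam) * lam ^ k / (Nat.factorial k)

/-- Binomial probability mass function with `n` trials and success probability `p`. -/
def binomP (n : ℕ) (p : ℝ) (k : ℕ) : ℝ := (n.choose k : ℝ) * p ^ k * (1 - p) ^ (n - k)

/-- Multinomial probability mass function with `k` trials and probability vector `p`. -/
def multinomP {m : ℕ} (k : ℕ) (p : Fin m → ℝ) (z : Fin m → ℕ) : ℝ :=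
  if (∑ i, z i) = k then (Nat.multinomial Finset.univ z : ℝ) * ∏ i, p i ^ z i else 0

/-- Normalisation `η(v) = v / (1ᵀ v)` of a count vector. -/
def etaN {m : ℕ} (v : Fin m → ℕ) : Fin m → ℝ := fun i => (v i : ℝ) / (∑ j, (v j : ℝ))

/-- Normalisation `η(v) = v / (1ᵀ v)` of a real vector. -/
def etaR {m : ℕ} (v : Fin m → ℝ) : Fin m → ℝ := fun i => v i / (∑ j, v j)

/-- A matrix (given as rows) is row-stochastic. -/
def IsStochastic {m : ℕ} (K : Fin m → Fin m → ℝ) : Prop :=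
  (∀ i j, 0 ≤ K i j) ∧ ∀ i, ∑ j, K i j = 1

/-- `p` is a probability vector. -/
def IsProbVec {m : ℕ} (p : Fin m → ℝ) : Prop := (∀ i, 0 ≤ p i) ∧ ∑ i, p i = 1

end PAL

/-!
Thinning `x ∼ Pois(λ)` by `Binomial(x, q)` gives `ȳ ∼ Pois(λ ∘ q)`, and a `Pois(μ)` count split
multinomially with probabilities `p` has independent `Pois(μ pⱼ)` cells; so the entries of `M`
are independent with `Mⁱʲ ∼ Pois(λⁱ qⁱ Gⁱʲ)`. Each component of `y` is then a sum of independent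
Poisson variables (a column of `M` and `ŷᵏ`), hence Poisson by the multinomial theorem. The sums
are computed in `ℝ≥0∞`, where they can be reordered freely, and transferred back to `ℝ` because
the total is finite.
-/

namespace PAL

open Finset
open scoped ENNReal

lemma IsStochastic.isProbVec_row {m : ℕ} {K : Fin m → Fin m → ℝ} (hK : IsStochastic K) (i : Fin m) :
    IsProbVec (K i) :=
  ⟨hK.1 i, hK.2 i⟩

lemma poisP_nonneg {r : ℝ} (hr : 0 ≤ r) (k : ℕ) : 0 ≤ poisP r k := by
  unfold poisP; positivity

lemma binomP_nonneg {p : ℝ} (hp0 : 0 ≤ p) (hp1 : p ≤ 1) (n k : ℕ) : 0 ≤ binomP n p k := by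
  have : 0 ≤ 1 - p := by linarith
  unfold binomP; positivity

lemma multinomP_nonneg {m : ℕ} {p : Fin m → ℝ} (hp : ∀ i, 0 ≤ p i) (k : ℕ) (z : Fin m → ℕ) :
    0 ≤ multinomP k p z := by
  unfold multinomP
  split_ifs
  · exact mul_nonneg (Nat.cast_nonneg _) (prod_nonneg fun i _ => pow_nonneg (hp i) _)
  · exact le_rfl

lemma hasSum_poisP (r : ℝ) : HasSum (poisP r) 1 := by
  have h := (NormedSpace.expSeries_div_hasSum_exp r).mul_left (Real.exp (-r))
  rw [← Real.exp_eq_exp_ℝ, ← Real.exp_add, neg_add_cancel, Real.exp_zero] at h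
  have hfun : poisP r = fun n => Real.exp (-r) * (r ^ n / n.factorial) := by
    funext n
    rw [poisP, mul_div_assoc]
  rwa [hfun]

lemma poisP_mul_binomP (lam p : ℝ) {n k : ℕ} (hkn : k ≤ n) :
    poisP lam n * binomP n p k = poisP (lam * p) k * poisP (lam * (1 - p)) (n - k) := by
  have hfact : (n.choose k : ℝ) * k.factorial * (n - k).factorial = n.factorial := by
    exact_mod_cast Nat.choose_mul_factorial_mul_factorial hkn
  have hexp : Real.exp (-lam) = Real.exp (-(lam * p)) * Real.exp (-(lam * (1 - p))) := by
    rw [← Real.exp_add]; ring_nf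
  have hpow : lam ^ n = lam ^ k * lam ^ (n - k) := by rw [← pow_add, Nat.add_sub_cancel' hkn]
  have hchoose : (n.choose k : ℝ) ≠ 0 := by positivity [Nat.choose_pos hkn]
  unfold poisP binomP
  rw [hexp, hpow, ← hfact, mul_pow, mul_pow]
  field_simp

lemma hasSum_poisP_mul_binomP (lam p : ℝ) (k : ℕ) :
    HasSum (fun n => poisP lam n * binomP n p k) (poisP (lam * p) k) := by
  have hvanish : ∀ n ∉ Set.range (· + k), poisP lam n * binomP n p k = 0 := by
    intro n hn
    have hnk : n < k := by
      by_contra! h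
      exact hn ⟨n - k, Nat.sub_add_cancel h⟩
    simp [binomP, Nat.choose_eq_zero_of_lt hnk]
  rw [← (add_left_injective k).hasSum_iff hvanish]
  have hshift : (fun n => poisP lam n * binomP n p k) ∘ (· + k)
      = fun j => poisP (lam * p) k * poisP (lam * (1 - p)) j := by
    funext j
    simp only [Function.comp, poisP_mul_binomP lam p (Nat.le_add_left k j), Nat.add_sub_cancel]
  simpa [hshift] using (hasSum_poisP (lam * (1 - p))).mul_left (poisP (lam * p) k)

lemma prod_poisP {ι : Type*} [Fintype ι] (ν : ι → ℝ) (c : ι → ℕ) :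
    ∏ i, poisP (ν i) (c i)
      = Real.exp (-∑ i, ν i) * (Nat.multinomial univ c * ∏ i, ν i ^ c i)
          / (∑ i, c i).factorial := by
  have hspec : ((∏ i, (c i).factorial : ℕ) : ℝ) * Nat.multinomial univ c
      = (∑ i, c i).factorial := by
    exact_mod_cast Nat.multinomial_spec univ c
  have hfact : ((∏ i, (c i).factorial : ℕ) : ℝ) ≠ 0 := by positivity
  have hmult : (Nat.multinomial univ c : ℝ) ≠ 0 := by positivity [Nat.multinomial_pos univ c]
  rw [← hspec, ← sum_neg_distrib, Real.exp_sum]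
  simp only [poisP, prod_div_distrib, prod_mul_distrib, Nat.cast_prod]
  field_simp

lemma sum_piAntidiag_prod_poisP {ι : Type*} [Fintype ι] (ν : ι → ℝ) (N : ℕ) :
    ∑ c ∈ piAntidiag univ N, ∏ i, poisP (ν i) (c i) = poisP (∑ i, ν i) N := by
  have hsum : ∀ c ∈ piAntidiag univ N, ∏ i, poisP (ν i) (c i)
      = Real.exp (-∑ i, ν i) / N.factorial * (Nat.multinomial univ c * ∏ i, ν i ^ c i) := by
    intro c hc
    rw [prod_poisP, (mem_piAntidiag.1 hc).1]
    ring
  rw [sum_congr rfl hsum, ← mul_sum, ← sum_pow_eq_sum_piAntidiag, poisP]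
  ring

lemma poisP_mul_multinomP {m : ℕ} (lam : ℝ) {p : Fin m → ℝ} (hp : ∑ i, p i = 1)
    (z : Fin m → ℕ) :
    poisP lam (∑ i, z i) * multinomP (∑ i, z i) p z = ∏ i, poisP (lam * p i) (z i) := by
  rw [prod_poisP, ← mul_sum, hp, mul_one, multinomP, if_pos rfl]
  simp only [mul_pow, prod_mul_distrib, prod_pow_eq_pow_sum, poisP]
  ring

lemma tsum_pi_prod {β : Type*} :
    ∀ {n : ℕ} (g : Fin n → β → ℝ≥0∞), ∑' x : Fin n → β, ∏ i, g i (x i) = ∏ i, ∑' b, g i b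
  | 0, g => by simp
  | n + 1, g => by
    rw [← (Fin.consEquiv fun _ => β).tsum_eq, ENNReal.tsum_prod', Fin.prod_univ_succ]
    simp only [Fin.consEquiv, Equiv.coe_fn_mk, Fin.prod_univ_succ, Fin.cons_zero, Fin.cons_succ,
      ENNReal.tsum_mul_left, tsum_pi_prod, ENNReal.tsum_mul_right]

lemma ofReal_tsum_of_tsum_ne_top {α : Type*} {f : α → ℝ} {g : α → ℝ≥0∞} (hf : ∀ a, 0 ≤ f a)
    (hfg : ∀ a, ENNReal.ofReal (f a) = g a) (hg : ∑' a, g a ≠ ∞) :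
    ENNReal.ofReal (∑' a, f a) = ∑' a, g a := by
  have hsummable : Summable f := by
    simpa [← hfg, ENNReal.toReal_ofReal (hf _)] using ENNReal.summable_toReal hg
  rw [ENNReal.ofReal_tsum_of_nonneg hf hsummable]
  exact tsum_congr hfg

lemma tsum_ite_sum_eq_ofReal_poisP_sum {ι : Type*} [Fintype ι] {ν : ι → ℝ} (hν : ∀ i, 0 ≤ ν i)
    (N : ℕ) :
    ∑' c : ι → ℕ, (if ∑ i, c i = N then ∏ i, ENNReal.ofReal (poisP (ν i) (c i)) else 0)
      = ENNReal.ofReal (poisP (∑ i, ν i) N) := by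
  rw [tsum_eq_sum (s := piAntidiag univ N) fun c hc => if_neg (by simpa using hc),
    ← sum_piAntidiag_prod_poisP,
    ENNReal.ofReal_sum_of_nonneg fun c _ => prod_nonneg fun i _ => poisP_nonneg (hν i) _]
  refine sum_congr rfl fun c hc => ?_
  rw [if_pos (mem_piAntidiag.1 hc).1,
    ENNReal.ofReal_prod_of_nonneg fun i _ => poisP_nonneg (hν i) _]

lemma tsum_colSum_eq_prod_ofReal_poisP {ι : Type*} [Fintype ι] {n : ℕ} {ν : ι → Fin n → ℝ}
    (hν : ∀ i k, 0 ≤ ν i k) (y : Fin n → ℕ) :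
    ∑' M : ι → Fin n → ℕ, (if (fun k => ∑ i, M i k) = y then
        ∏ i, ∏ k, ENNReal.ofReal (poisP (ν i k) (M i k)) else 0)
      = ∏ k, ENNReal.ofReal (poisP (∑ i, ν i k) (y k)) := by
  rw [← (Equiv.piComm fun (_ : Fin n) (_ : ι) => ℕ).tsum_eq]
  have hsummand : ∀ Z : Fin n → ι → ℕ,
      (if (fun k => ∑ i, Equiv.piComm _ Z i k) = y then
        ∏ i, ∏ k, ENNReal.ofReal (poisP (ν i k) (Equiv.piComm _ Z i k)) else 0)
      = ∏ k, if ∑ i, Z k i = y k then ∏ i, ENNReal.ofReal (poisP (ν i k) (Z k i)) else 0 := by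
    intro Z
    rw [prod_ite_zero, Finset.prod_comm]
    simp only [mem_univ, true_implies, funext_iff]
    rfl
  simp only [hsummand]
  rw [tsum_pi_prod fun k (c : ι → ℕ) =>
    if ∑ i, c i = y k then ∏ i, ENNReal.ofReal (poisP (ν i k) (c i)) else 0]
  exact prod_congr rfl fun k _ => tsum_ite_sum_eq_ofReal_poisP_sum (fun i => hν i k) (y k)

lemma tsum_pi_prod_ofReal_poisP_mul_binomP {n : ℕ} {lam p : Fin n → ℝ} (hlam : ∀ i, 0 ≤ lam i)
    (hp0 : ∀ i, 0 ≤ p i) (hp1 : ∀ i, p i ≤ 1) (k : Fin n → ℕ) :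
    ∑' x : Fin n → ℕ, ∏ i, ENNReal.ofReal (poisP (lam i) (x i) * binomP (x i) (p i) (k i))
      = ∏ i, ENNReal.ofReal (poisP (lam i * p i) (k i)) := by
  rw [tsum_pi_prod fun i a => ENNReal.ofReal (poisP (lam i) a * binomP a (p i) (k i))]
  refine prod_congr rfl fun i _ => ?_
  have h := hasSum_poisP_mul_binomP (lam i) (p i) (k i)
  rw [← ENNReal.ofReal_tsum_of_nonneg
    (fun a => mul_nonneg (poisP_nonneg (hlam i) a) (binomP_nonneg (hp0 i) (hp1 i) a _))
    h.summable, h.tsum_eq]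

lemma tsum_prod_ofReal_poisP_mul_prod_ofReal_multinomP {ι : Type*} [Fintype ι] {m : ℕ}
    {μ : ι → ℝ} (hμ : ∀ i, 0 ≤ μ i) {G : ι → Fin m → ℝ} (hG : ∀ i, IsProbVec (G i))
    (M : ι → Fin m → ℕ) :
    ∑' yb : ι → ℕ, (∏ i, ENNReal.ofReal (poisP (μ i) (yb i))) *
        ∏ i, ENNReal.ofReal (multinomP (yb i) (G i) (M i))
      = ∏ i, ∏ j, ENNReal.ofReal (poisP (μ i * G i j) (M i j)) := by
  have hvanish : ∀ yb ≠ fun i => ∑ j, M i j, (∏ i, ENNReal.ofReal (poisP (μ i) (yb i))) *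
      ∏ i, ENNReal.ofReal (multinomP (yb i) (G i) (M i)) = 0 := by
    intro yb hyb
    obtain ⟨i, hi⟩ := Function.ne_iff.1 hyb
    refine mul_eq_zero_of_right _ (prod_eq_zero (mem_univ i) ?_)
    rw [multinomP, if_neg (Ne.symm hi), ENNReal.ofReal_zero]
  rw [tsum_eq_single _ hvanish, ← prod_mul_distrib]
  refine prod_congr rfl fun i _ => ?_
  rw [← ENNReal.ofReal_mul (poisP_nonneg (hμ i) _), poisP_mul_multinomP _ (hG i).2,
    ENNReal.ofReal_prod_of_nonneg fun j _ => poisP_nonneg (mul_nonneg (hμ i) ((hG i).1 j)) _]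

lemma tsum_colSum_add_eq_prod_ofReal_poisP {ι : Type*} [Fintype ι] {n : ℕ} {ν : ι → Fin n → ℝ}
    (hν : ∀ i k, 0 ≤ ν i k) {κ : Fin n → ℝ} (hκ : ∀ k, 0 ≤ κ k) (y : Fin n → ℕ) :
    ∑' M : ι → Fin n → ℕ, (∏ i, ∏ k, ENNReal.ofReal (poisP (ν i k) (M i k))) *
        ∑' yh : Fin n → ℕ, (if (fun k => ∑ i, M i k + yh k) = y then
          ∏ k, ENNReal.ofReal (poisP (κ k) (yh k)) else 0)
      = ∏ k, ENNReal.ofReal (poisP (∑ i, ν i k + κ k) (y k)) := by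
  -- `ŷ` is the extra row `none` of a Poisson matrix indexed by `Option ι`.
  let ν' : Option ι → Fin n → ℝ := fun o k => o.elim (κ k) (ν · k)
  have hν' : ∀ o k, 0 ≤ ν' o k := by rintro (_ | i) k <;> simp [ν', hν, hκ]
  have hsum : ∀ k, ∑ i, ν i k + κ k = ∑ o, ν' o k := fun k => by
    simp [ν', Fintype.sum_option, add_comm]
  simp only [hsum, ← tsum_colSum_eq_prod_ofReal_poisP hν' y, ← ENNReal.tsum_mul_left]
  conv_rhs => rw [← Equiv.piOptionEquivProd.symm.tsum_eq, ENNReal.tsum_prod']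
  rw [ENNReal.tsum_comm]
  refine tsum_congr fun yh => tsum_congr fun M => ?_
  simp only [add_comm, mul_ite, mul_zero, Equiv.piOptionEquivProd, Equiv.symm_mk, Equiv.coe_fn_mk,
    Fintype.sum_option, Fintype.prod_option, Option.elim_none, Option.elim_some, ν']
  rw [mul_comm]

lemma tsum_thinning_splitting {m : ℕ} {lam q : Fin m → ℝ} (hlam : ∀ i, 0 ≤ lam i)
    (hq0 : ∀ i, 0 ≤ q i) (hq1 : ∀ i, q i ≤ 1) {G : Fin m → Fin m → ℝ} (hG : IsStochastic G)
    (C : (Fin m → Fin m → ℕ) → ℝ≥0∞) :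
    ∑' x : Fin m → ℕ, ∑' yb : Fin m → ℕ,
        (∏ i, ENNReal.ofReal (poisP (lam i) (x i) * binomP (x i) (q i) (yb i))) *
          ∑' M : Fin m → Fin m → ℕ, (∏ i, ENNReal.ofReal (multinomP (yb i) (G i) (M i))) * C M
      = ∑' M : Fin m → Fin m → ℕ,
          (∏ i, ∏ j, ENNReal.ofReal (poisP (lam i * q i * G i j) (M i j))) * C M := by
  calc _ = ∑' yb : Fin m → ℕ, (∏ i, ENNReal.ofReal (poisP (lam i * q i) (yb i))) *
          ∑' M : Fin m → Fin m → ℕ, (∏ i, ENNReal.ofReal (multinomP (yb i) (G i) (M i))) * C M := by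
        rw [ENNReal.tsum_comm]
        simp only [ENNReal.tsum_mul_right, tsum_pi_prod_ofReal_poisP_mul_binomP hlam hq0 hq1]
    _ = ∑' M : Fin m → Fin m → ℕ, (∑' yb : Fin m → ℕ,
          (∏ i, ENNReal.ofReal (poisP (lam i * q i) (yb i))) *
            ∏ i, ENNReal.ofReal (multinomP (yb i) (G i) (M i))) * C M := by
        simp only [← ENNReal.tsum_mul_left, ← ENNReal.tsum_mul_right, mul_assoc]
        exact ENNReal.tsum_comm
    _ = _ := by
        simp only [tsum_prod_ofReal_poisP_mul_prod_ofReal_multinomP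
          (fun i => mul_nonneg (hlam i) (hq0 i)) hG.isProbVec_row]

def hierarchyPMF {m : ℕ} (lam q κ : Fin m → ℝ) (G : Fin m → Fin m → ℝ)
    (x yb : Fin m → ℕ) (M : Fin m → Fin m → ℕ) (yh : Fin m → ℕ) : ℝ :=
  (∏ i, poisP (lam i) (x i)) * (∏ i, binomP (x i) (q i) (yb i)) *
    (∏ i, multinomP (yb i) (G i) (M i)) * ∏ k, poisP (κ k) (yh k)

section hierarchy

variable {m : ℕ} {lam q κ : Fin m → ℝ} {G : Fin m → Fin m → ℝ}

lemma hierarchyPMF_nonneg (hlam : ∀ i, 0 ≤ lam i) (hq0 : ∀ i, 0 ≤ q i) (hq1 : ∀ i, q i ≤ 1)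
    (hκ : ∀ i, 0 ≤ κ i) (hG : IsStochastic G) (x yb : Fin m → ℕ) (M : Fin m → Fin m → ℕ)
    (yh : Fin m → ℕ) : 0 ≤ hierarchyPMF lam q κ G x yb M yh := by
  unfold hierarchyPMF
  refine mul_nonneg (mul_nonneg (mul_nonneg ?_ ?_) ?_) ?_ <;> refine prod_nonneg fun i _ => ?_
  exacts [poisP_nonneg (hlam i) _, binomP_nonneg (hq0 i) (hq1 i) _ _,
    multinomP_nonneg (hG.1 i) _ _, poisP_nonneg (hκ i) _]

lemma ofReal_hierarchyPMF (hlam : ∀ i, 0 ≤ lam i) (hq0 : ∀ i, 0 ≤ q i) (hq1 : ∀ i, q i ≤ 1)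
    (hκ : ∀ i, 0 ≤ κ i) (hG : IsStochastic G) (x yb : Fin m → ℕ) (M : Fin m → Fin m → ℕ)
    (yh : Fin m → ℕ) :
    ENNReal.ofReal (hierarchyPMF lam q κ G x yb M yh)
      = (∏ i, ENNReal.ofReal (poisP (lam i) (x i) * binomP (x i) (q i) (yb i))) *
          ((∏ i, ENNReal.ofReal (multinomP (yb i) (G i) (M i))) *
            ∏ k, ENNReal.ofReal (poisP (κ k) (yh k))) := by
  have hPB : ∀ i, 0 ≤ poisP (lam i) (x i) * binomP (x i) (q i) (yb i) := fun i =>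
    mul_nonneg (poisP_nonneg (hlam i) _) (binomP_nonneg (hq0 i) (hq1 i) _ _)
  have hM : ∀ i, 0 ≤ multinomP (yb i) (G i) (M i) := fun i => multinomP_nonneg (hG.1 i) _ _
  have hK : ∀ k, 0 ≤ poisP (κ k) (yh k) := fun k => poisP_nonneg (hκ k) _
  rw [hierarchyPMF, ← prod_mul_distrib, mul_assoc,
    ENNReal.ofReal_mul (prod_nonneg fun i _ => hPB i),
    ENNReal.ofReal_mul (prod_nonneg fun i _ => hM i),
    ENNReal.ofReal_prod_of_nonneg fun i _ => hPB i, ENNReal.ofReal_prod_of_nonneg fun i _ => hM i, ENNReal.ofReal_prod_of_nonneg fun k _ => hK k]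

lemma tsum_ofReal_ite_hierarchyPMF (hlam : ∀ i, 0 ≤ lam i) (hq0 : ∀ i, 0 ≤ q i)
    (hq1 : ∀ i, q i ≤ 1) (hκ : ∀ i, 0 ≤ κ i) (hG : IsStochastic G) (y : Fin m → ℕ) :
    ∑' x : Fin m → ℕ, ∑' yb : Fin m → ℕ, ∑' M : Fin m → Fin m → ℕ, ∑' yh : Fin m → ℕ,
        ENNReal.ofReal (if (fun k => ∑ i, M i k + yh k) = y then
          hierarchyPMF lam q κ G x yb M yh else 0)
      = ∏ k, ENNReal.ofReal (poisP (∑ i, lam i * q i * G i k + κ k) (y k)) := by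
  simp only [apply_ite ENNReal.ofReal, ofReal_hierarchyPMF hlam hq0 hq1 hκ hG, ENNReal.ofReal_zero,
    ← mul_ite_zero, ENNReal.tsum_mul_left, tsum_thinning_splitting hlam hq0 hq1 hG]
  exact tsum_colSum_add_eq_prod_ofReal_poisP
    (fun i k => mul_nonneg (mul_nonneg (hlam i) (hq0 i)) (hG.1 i k)) hκ y

end hierarchy

end PAL

open PAL

/-- Suppose `x ∼ Pois(λ)`; given `x`, `ȳⁱ ∼ Binomial(xⁱ, qⁱ)` conditionally
independently; given `ȳ`, the rows of `M` are conditionally independent with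
`Mⁱ ∼ Multinomial(ȳⁱ, Gⁱ)` for row-stochastic `G`; `ỹ := (1ᵀ M)ᵀ`; and `y := ỹ + ŷ` with
`ŷ ∼ Pois(κ)` independent.  Then `y ∼ Pois(((λ ∘ q)ᵀ G)ᵀ + κ)`: for every `y` the marginal
pmf of `y` equals the vector-Poisson pmf with intensity `((λ ∘ q)ᵀ G)ᵀ + κ`. -/
theorem statement_2 {m : ℕ} (lam q κ : Fin m → ℝ) (G : Fin m → Fin m → ℝ)
    (hlam : ∀ i, 0 ≤ lam i) (hq0 : ∀ i, 0 ≤ q i) (hq1 : ∀ i, q i ≤ 1)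
    (hκ : ∀ i, 0 ≤ κ i) (hG : PAL.IsStochastic G)
    (y : Fin m → ℕ) :
    (∑' x : Fin m → ℕ, ∑' yb : Fin m → ℕ, ∑' M : Fin m → Fin m → ℕ, ∑' yh : Fin m → ℕ,
        (if (fun k => (∑ i, M i k) + yh k) = y then
          (∏ i, PAL.poisP (lam i) (x i)) * (∏ i, PAL.binomP (x i) (q i) (yb i)) *
            (∏ i, PAL.multinomP (yb i) (G i) (M i)) * ∏ k, PAL.poisP (κ k) (yh k)
        else 0))
      = ∏ k, PAL.poisP ((∑ i, lam i * q i * G i k) + κ k) (y k) := by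
  change ∑' x, ∑' yb, ∑' M, ∑' yh,
    (if (fun k => ∑ i, M i k + yh k) = y then hierarchyPMF lam q κ G x yb M yh else 0) = _
  have hF : ∀ x yb M yh, 0 ≤ (if (fun k => ∑ i, M i k + yh k) = y then
      hierarchyPMF lam q κ G x yb M yh else 0) := fun x yb M yh =>
    ite_nonneg (hierarchyPMF_nonneg hlam hq0 hq1 hκ hG x yb M yh) le_rfl
  have hrate : ∀ k, 0 ≤ ∑ i, lam i * q i * G i k + κ k := fun k =>
    add_nonneg (Finset.sum_nonneg fun i _ => mul_nonneg (mul_nonneg (hlam i) (hq0 i)) (hG.1 i k))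
      (hκ k)
  have hE := tsum_ofReal_ite_hierarchyPMF hlam hq0 hq1 hκ hG y
  rw [← ENNReal.ofReal_prod_of_nonneg fun k _ => poisP_nonneg (hrate k) _] at hE
  have hfin := ne_of_eq_of_ne hE ENNReal.ofReal_ne_top
  rw [← ENNReal.ofReal_eq_ofReal_iff
    (tsum_nonneg fun x => tsum_nonneg fun yb => tsum_nonneg fun M => tsum_nonneg (hF x yb M))
    (Finset.prod_nonneg fun k _ => poisP_nonneg (hrate k) _), ← hE]
  refine ofReal_tsum_of_tsum_ne_top
    (fun x => tsum_nonneg fun yb => tsum_nonneg fun M => tsum_nonneg (hF x yb M)) (fun x => ?_) hfin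
  replace hfin := ENNReal.ne_top_of_tsum_ne_top hfin x
  refine ofReal_tsum_of_tsum_ne_top
    (fun yb => tsum_nonneg fun M => tsum_nonneg (hF x yb M)) (fun yb => ?_) hfin
  replace hfin := ENNReal.ne_top_of_tsum_ne_top hfin yb
  refine ofReal_tsum_of_tsum_ne_top (fun M => tsum_nonneg (hF x yb M)) (fun M => ?_) hfin
  exact ofReal_tsum_of_tsum_ne_top (hF x yb M) (fun _ => rfl) (ENNReal.ne_top_of_tsum_ne_top hfin M)
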